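/- NSLD is a metric on finite multisets of strings: in particular, the triangle inequality NSLD(X,Y) + NSLD(Y,Z) ≥ NSLD(X,Z) holds for all finite multisets of strings X, Y, Z. -/

import Mathlib

variable {α : Type*} [Fintype α] [DecidableEq α]

/-- Cost structure for Levenshtein distance (removed from Mathlib; restored with its old meaning). -/
structure Levenshtein.Cost (α β δ : Type*) where
  delete : α → δ
  insert : β → δ
  substitute : α → β → δ

/-- The default cost: every deletion, insertion and substitution of distinct letters costs 1. -/
def Levenshtein.defaultCost {α : Type*} [DecidableEq α] : Levenshtein.Cost α α ℕ where
  delete _ := 1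
  insert _ := 1
  substitute a b := if a = b then 0 else 1

/-- Levenshtein distance with a given cost (old Mathlib's `levenshtein`, by its recursion equations). -/
def levenshtein {α β δ : Type*} [AddZeroClass δ] [Min δ] (C : Levenshtein.Cost α β δ) :
    List α → List β → δ
  | [], [] => 0
  | [], y :: ys => C.insert y + levenshtein C [] ys
  | x :: xs, [] => C.delete x + levenshtein C xs []
  | x :: xs, y :: ys =>
    min (C.delete x + levenshtein C xs (y :: ys))
      (min (C.insert y + levenshtein C (x :: xs) ys) (C.substitute x y + levenshtein C xs ys))

/-- Levenshtein distance: the minimum number of single-character insertions,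
deletions, and substitutions transforming one string into another. -/
def LD (x y : List α) : ℕ := levenshtein Levenshtein.defaultCost x y

/-- Normalized Levenshtein distance. -/
noncomputable def NLD (x y : List α) : ℝ :=
  2 * LD x y / (x.length + y.length + LD x y)

/-- Aggregate length of the tokens of a tokenized string (multiset of strings). -/
def aggLen (X : Multiset (List α)) : ℕ := (X.map List.length).sum

/-- Pad a multiset of strings with empty strings up to size `k`. -/
def pad (X : Multiset (List α)) (k : ℕ) : Multiset (List α) :=
  X + Multiset.replicate (k - Multiset.card X) []

/-- Setwise Levenshtein distance: pad both multisets with empty strings to size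
`k = max(|X|,|Y|)`, then take the minimum over all bijections (i.e. over all
orderings of the two padded multisets as lists) of the sum of tokenwise
Levenshtein distances. -/
noncomputable def SLD (X Y : Multiset (List α)) : ℕ :=
  sInf { n | ∃ xs ys : List (List α),
    (↑xs : Multiset (List α)) = pad X (max (Multiset.card X) (Multiset.card Y)) ∧
    (↑ys : Multiset (List α)) = pad Y (max (Multiset.card X) (Multiset.card Y)) ∧
    n = (List.zipWith LD xs ys).sum }

/-- Normalized Setwise Levenshtein distance. -/
noncomputable def NSLD (X Y : Multiset (List α)) : ℝ :=
  2 * SLD X Y / (aggLen X + aggLen Y + SLD X Y)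

/-!
Write `SLD` as a minimum of `∑ LD a b` over couplings of the padded multisets, i.e. multisets
of pairs `(a, b)` with the two padded multisets as marginals. Composing an optimal coupling of
`X, Y` with one of `Y, Z` and applying the triangle inequality of `LD` pairwise gives the
triangle inequality for `SLD`; padding all three multisets to a common size is harmless, because
a pair of padding strings can be removed from a coupling without increasing its cost (reroute
`([], b)` and `(a, [])` to `(a, b)`).

For `NSLD`, the map `d ↦ d / (M + d)` is increasing when `M ≥ 0`, so writing `L = aggLen`,
`a = SLD X Y` and `b = SLD Y Z` we get `NSLD X Z ≤ 2 (a + b) / (L X + L Z + a + b)`. Splitting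
this fraction in two and using `L Y ≤ a + L X` and `L Y ≤ b + L Z` to shrink the two
denominators finishes the proof.
-/

section Levenshtein

variable {β : Type*} [DecidableEq β]

@[simp] lemma LD_nil_left (y : List β) : LD [] y = y.length := by
  induction y <;> simp_all [LD, levenshtein, Levenshtein.defaultCost, add_comm]

@[simp] lemma LD_nil_right (x : List β) : LD x [] = x.length := by
  induction x <;> simp_all [LD, levenshtein, Levenshtein.defaultCost, add_comm]

lemma LD_cons_cons (a : β) (xs : List β) (b : β) (ys : List β) :
    LD (a :: xs) (b :: ys) =
      min (1 + LD xs (b :: ys))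
        (min (1 + LD (a :: xs) ys) ((if a = b then 0 else 1) + LD xs ys)) := by
  simp [LD, levenshtein, Levenshtein.defaultCost]

@[simp] lemma LD_self (x : List β) : LD x x = 0 := by
  induction x with
  | nil => simp
  | cons a t ih => simp [LD_cons_cons, ih]

lemma LD_comm (x y : List β) : LD x y = LD y x := by
  induction x generalizing y with
  | nil => simp
  | cons a xs ihx =>
    induction y with
    | nil => simp
    | cons b ys ihy =>
      simp only [LD_cons_cons, ihx, ← ihy, eq_comm (a := a)]
      omega

lemma LD_le_length_add : ∀ x y : List β, LD x y ≤ x.length + y.length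
  | [], y => by simp
  | _ :: _, [] => by simp
  | a :: xs, b :: ys => by
    have := LD_le_length_add xs (b :: ys)
    rw [LD_cons_cons]
    simp only [List.length_cons] at *
    omega

lemma length_le_LD_add : ∀ x y : List β, y.length ≤ LD x y + x.length
  | [], y => by simp
  | _ :: _, [] => by simp
  | a :: xs, b :: ys => by
    have h₁ := length_le_LD_add xs (b :: ys)
    have h₂ := length_le_LD_add (a :: xs) ys
    have h₃ := length_le_LD_add xs ys
    rw [LD_cons_cons]
    simp only [List.length_cons] at *
    split <;> omega
termination_by x y => x.length + y.length

/-- In the inductive step, each of the nine combinations of a last edit turning `x` into `y`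
and one turning `y` into `z` is dominated, through the induction hypothesis, by one of the
three recursive options for `LD x z`. -/
theorem LD_triangle : ∀ x y z : List β, LD x z ≤ LD x y + LD y z
  | x, [], z => by simpa using LD_le_length_add x z
  | [], b :: ys, z => by
    have := length_le_LD_add (b :: ys) z
    simp only [LD_nil_left] at *
    omega
  | a :: xs, b :: ys, [] => by
    have := length_le_LD_add (b :: ys) (a :: xs)
    rw [LD_comm (a :: xs) (b :: ys)]
    simp only [LD_nil_right] at *
    omega
  | a :: xs, b :: ys, c :: zs => by
    have t₁ := LD_triangle xs (b :: ys) (c :: zs)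
    have t₂ := LD_triangle (a :: xs) (b :: ys) zs
    have t₃ := LD_triangle (a :: xs) ys (c :: zs)
    have t₄ := LD_triangle (a :: xs) ys zs
    have t₅ := LD_triangle xs ys (c :: zs)
    have t₆ := LD_triangle xs ys zs
    have hsub :
        (if a = c then 0 else 1) ≤ (if a = b then 0 else 1) + (if b = c then 0 else 1) := by
      split_ifs <;> simp_all
    rw [LD_cons_cons a xs c zs, LD_cons_cons a xs b ys, LD_cons_cons b ys c zs] at *
    omega
termination_by x y z => x.length + y.length + z.length

end Levenshtein

section Coupling

variable {β : Type*}

/-- A multiset of pairs with marginals `A` and `B` encodes a bijection between `A` and `B`;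
this replaces the orderings of the padded multisets in the definition of `SLD`. -/
def IsCoupling (P : Multiset (β × β)) (A B : Multiset β) : Prop :=
  P.map Prod.fst = A ∧ P.map Prod.snd = B

lemma IsCoupling.swap {P : Multiset (β × β)} {A B : Multiset β} (h : IsCoupling P A B) :
    IsCoupling (P.map Prod.swap) B A := by
  simpa [IsCoupling, Multiset.map_map, and_comm] using h

lemma exists_isCoupling {A B : Multiset β} (h : Multiset.card A = Multiset.card B) :
    ∃ P, IsCoupling P A B := by
  refine ⟨↑(A.toList.zip B.toList), ?_, ?_⟩ <;>
    simp [List.map_fst_zip, List.map_snd_zip, h]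

variable [DecidableEq β]

def couplingCost (P : Multiset (List β × List β)) : ℕ := (P.map (Function.uncurry LD)).sum

noncomputable def minCouplingCost (A B : Multiset (List β)) : ℕ :=
  sInf {n | ∃ P, IsCoupling P A B ∧ n = couplingCost P}

@[simp] lemma couplingCost_cons (p : List β × List β) (P : Multiset (List β × List β)) :
    couplingCost (p ::ₘ P) = LD p.1 p.2 + couplingCost P := by
  simp [couplingCost, Function.uncurry]

lemma couplingCost_map_swap (P : Multiset (List β × List β)) :
    couplingCost (P.map Prod.swap) = couplingCost P := by
  simp only [couplingCost, Multiset.map_map]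
  congr 1
  exact Multiset.map_congr rfl fun p _ => LD_comm _ _

lemma minCouplingCost_le {P : Multiset (List β × List β)} {A B : Multiset (List β)}
    (h : IsCoupling P A B) : minCouplingCost A B ≤ couplingCost P :=
  Nat.sInf_le ⟨P, h, rfl⟩

lemma exists_couplingCost_eq_minCouplingCost {A B : Multiset (List β)}
    (h : Multiset.card A = Multiset.card B) :
    ∃ P, IsCoupling P A B ∧ couplingCost P = minCouplingCost A B := by
  obtain ⟨P, hP⟩ := exists_isCoupling h
  obtain ⟨Q, hQ, hcost⟩ :=
    Nat.sInf_mem (s := {n | ∃ P, IsCoupling P A B ∧ n = couplingCost P}) ⟨_, P, hP, rfl⟩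
  exact ⟨Q, hQ, hcost.symm⟩

lemma minCouplingCost_self (A : Multiset (List β)) : minCouplingCost A A = 0 := by
  have h : IsCoupling (A.map fun t => (t, t)) A A := by simp [IsCoupling, Multiset.map_map]
  simpa [couplingCost, Multiset.map_map, Function.comp_def] using minCouplingCost_le h

lemma minCouplingCost_comm (A B : Multiset (List β)) :
    minCouplingCost A B = minCouplingCost B A := by
  unfold minCouplingCost
  congr 1
  ext n
  constructor <;> rintro ⟨P, hP, rfl⟩ <;>
    exact ⟨P.map Prod.swap, hP.swap, (couplingCost_map_swap P).symm⟩

lemma exists_isCoupling_comp {P Q : Multiset (List β × List β)} {A B C : Multiset (List β)}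
    (hP : IsCoupling P A B) (hQ : IsCoupling Q B C) :
    ∃ R, IsCoupling R A C ∧ couplingCost R ≤ couplingCost P + couplingCost Q := by
  induction P using Multiset.induction_on generalizing Q A B C with
  | empty =>
    obtain ⟨rfl, rfl⟩ := hP
    obtain rfl : Q = 0 := by simpa using hQ.1
    exact ⟨0, hQ, by simp⟩
  | cons p P ih =>
    obtain ⟨rfl, rfl⟩ := hP
    obtain ⟨q, hq, hqp⟩ := Multiset.mem_map.1 (show p.2 ∈ Q.map Prod.fst by simp [hQ.1])
    obtain ⟨Q, rfl⟩ := Multiset.exists_cons_of_mem hq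
    obtain ⟨hQ₁, rfl⟩ := hQ
    rw [Multiset.map_cons, Multiset.map_cons, hqp, Multiset.cons_inj_right] at hQ₁
    obtain ⟨R, hR, hcost⟩ := ih ⟨rfl, rfl⟩ ⟨hQ₁, rfl⟩
    refine ⟨(p.1, q.2) ::ₘ R, by simp [IsCoupling, hR.1, hR.2], ?_⟩
    have := LD_triangle p.1 p.2 q.2
    simp only [couplingCost_cons, hqp] at *
    omega

lemma minCouplingCost_triangle {A B C : Multiset (List β)}
    (hAB : Multiset.card A = Multiset.card B) (hBC : Multiset.card B = Multiset.card C) :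
    minCouplingCost A C ≤ minCouplingCost A B + minCouplingCost B C := by
  obtain ⟨P, hP, hPcost⟩ := exists_couplingCost_eq_minCouplingCost hAB
  obtain ⟨Q, hQ, hQcost⟩ := exists_couplingCost_eq_minCouplingCost hBC
  obtain ⟨R, hR, hRcost⟩ := exists_isCoupling_comp hP hQ
  rw [← hPcost, ← hQcost]
  exact (minCouplingCost_le hR).trans hRcost

lemma exists_isCoupling_of_cons_nil {P : Multiset (List β × List β)} {A B : Multiset (List β)}
    (hP : IsCoupling P ([] ::ₘ A) ([] ::ₘ B)) :
    ∃ Q, IsCoupling Q A B ∧ couplingCost Q ≤ couplingCost P := by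
  obtain ⟨hA, hB⟩ := hP
  obtain ⟨p, hp, hp₁⟩ := Multiset.mem_map.1 (show [] ∈ P.map Prod.fst by simp [hA])
  obtain ⟨P, rfl⟩ := Multiset.exists_cons_of_mem hp
  rw [Multiset.map_cons, hp₁, Multiset.cons_inj_right] at hA
  rw [Multiset.map_cons] at hB
  rcases Multiset.cons_eq_cons.1 hB with ⟨-, hB⟩ | ⟨-, B', hB', rfl⟩
  · exact ⟨P, ⟨hA, hB⟩, by simp⟩
  · obtain ⟨q, hq, hq₂⟩ := Multiset.mem_map.1 (show [] ∈ P.map Prod.snd by simp [hB'])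
    obtain ⟨P, rfl⟩ := Multiset.exists_cons_of_mem hq
    rw [Multiset.map_cons, hq₂, Multiset.cons_inj_right] at hB'
    subst hA hB'
    refine ⟨(q.1, p.2) ::ₘ P, by simp [IsCoupling], ?_⟩
    have := LD_le_length_add q.1 p.2
    simp only [couplingCost_cons, hp₁, hq₂, LD_nil_left, LD_nil_right]
    omega

lemma minCouplingCost_cons_nil {A B : Multiset (List β)}
    (h : Multiset.card A = Multiset.card B) :
    minCouplingCost ([] ::ₘ A) ([] ::ₘ B) = minCouplingCost A B := by
  apply le_antisymm
  · obtain ⟨P, hP, hcost⟩ := exists_couplingCost_eq_minCouplingCost h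
    have hP' : IsCoupling (([], []) ::ₘ P) ([] ::ₘ A) ([] ::ₘ B) := by
      simp [IsCoupling, hP.1, hP.2]
    simpa [hcost] using minCouplingCost_le hP'
  · obtain ⟨P, hP, hcost⟩ :=
      exists_couplingCost_eq_minCouplingCost (A := [] ::ₘ A) (B := [] ::ₘ B) (by simpa using h)
    obtain ⟨Q, hQ, hQcost⟩ := exists_isCoupling_of_cons_nil hP
    exact (minCouplingCost_le hQ).trans (hQcost.trans_eq hcost)

lemma aggLen_le_minCouplingCost_add {A B : Multiset (List β)}
    (h : Multiset.card A = Multiset.card B) :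
    aggLen B ≤ minCouplingCost A B + aggLen A := by
  obtain ⟨P, ⟨rfl, rfl⟩, hcost⟩ := exists_couplingCost_eq_minCouplingCost h
  rw [← hcost, aggLen, aggLen, couplingCost, Multiset.map_map, Multiset.map_map,
    ← Multiset.sum_map_add]
  exact Multiset.sum_map_le_sum_map _ _ fun p _ => length_le_LD_add p.1 p.2

end Coupling

section SLD

variable {β : Type*}

lemma card_pad {X : Multiset (List β)} {k : ℕ} (h : Multiset.card X ≤ k) :
    Multiset.card (pad X k) = k := by
  simp only [pad, Multiset.card_add, Multiset.card_replicate]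
  omega

lemma pad_succ {X : Multiset (List β)} {k : ℕ} (h : Multiset.card X ≤ k) :
    pad X (k + 1) = [] ::ₘ pad X k := by
  rw [pad, pad, Nat.sub_add_comm h, Multiset.replicate_succ, Multiset.add_cons]

@[simp] lemma aggLen_pad (X : Multiset (List β)) (k : ℕ) : aggLen (pad X k) = aggLen X := by
  simp [pad, aggLen]

variable [DecidableEq β]

lemma sInf_sum_zipWith_LD_eq_minCouplingCost {A B : Multiset (List β)}
    (h : Multiset.card A = Multiset.card B) :
    sInf {n | ∃ xs ys : List (List β), (↑xs : Multiset (List β)) = A ∧ ↑ys = B ∧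
      n = (List.zipWith LD xs ys).sum} = minCouplingCost A B := by
  unfold minCouplingCost
  congr 1
  ext n
  constructor
  · rintro ⟨xs, ys, rfl, rfl, rfl⟩
    simp only [Multiset.coe_card] at h
    refine ⟨↑(xs.zip ys), ?_, ?_⟩
    · simp [IsCoupling, List.map_fst_zip, List.map_snd_zip, h]
    · simp [couplingCost, List.map_uncurry_zip_eq_zipWith]
  · rintro ⟨P, ⟨rfl, rfl⟩, rfl⟩
    refine ⟨P.toList.map Prod.fst, P.toList.map Prod.snd, ?_, ?_, ?_⟩
    · rw [← Multiset.map_coe, Multiset.coe_toList]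
    · rw [← Multiset.map_coe, Multiset.coe_toList]
    · rw [← List.map_uncurry_zip_eq_zipWith, ← List.zip_of_prod rfl rfl, couplingCost,
        ← Multiset.sum_coe, ← Multiset.map_coe, Multiset.coe_toList]

lemma SLD_eq_minCouplingCost (X Y : Multiset (List β)) :
    SLD X Y = minCouplingCost (pad X (max (Multiset.card X) (Multiset.card Y)))
      (pad Y (max (Multiset.card X) (Multiset.card Y))) :=
  sInf_sum_zipWith_LD_eq_minCouplingCost <| by
    rw [card_pad (le_max_left _ _), card_pad (le_max_right _ _)]

lemma minCouplingCost_pad_eq_SLD {X Y : Multiset (List β)} {k : ℕ}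
    (hk : max (Multiset.card X) (Multiset.card Y) ≤ k) :
    minCouplingCost (pad X k) (pad Y k) = SLD X Y := by
  induction k, hk using Nat.le_induction with
  | base => exact (SLD_eq_minCouplingCost X Y).symm
  | succ k hk ih =>
    have hX : Multiset.card X ≤ k := (le_max_left _ _).trans hk
    have hY : Multiset.card Y ≤ k := (le_max_right _ _).trans hk
    rw [pad_succ hX, pad_succ hY,
      minCouplingCost_cons_nil (by rw [card_pad hX, card_pad hY]), ih]

lemma SLD_self (X : Multiset (List β)) : SLD X X = 0 := by
  rw [SLD_eq_minCouplingCost, minCouplingCost_self]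

lemma SLD_comm (X Y : Multiset (List β)) : SLD X Y = SLD Y X := by
  rw [SLD_eq_minCouplingCost, SLD_eq_minCouplingCost, minCouplingCost_comm, max_comm]

lemma aggLen_le_SLD_add (X Y : Multiset (List β)) : aggLen Y ≤ SLD X Y + aggLen X := by
  have h := aggLen_le_minCouplingCost_add (A := pad X (max (Multiset.card X) (Multiset.card Y)))
    (B := pad Y (max (Multiset.card X) (Multiset.card Y)))
    (by rw [card_pad (le_max_left _ _), card_pad (le_max_right _ _)])
  rwa [aggLen_pad, aggLen_pad, ← SLD_eq_minCouplingCost] at h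

theorem SLD_triangle (X Y Z : Multiset (List β)) : SLD X Z ≤ SLD X Y + SLD Y Z := by
  set K := max (max (Multiset.card X) (Multiset.card Y)) (Multiset.card Z)
  have hX : Multiset.card X ≤ K := (le_max_left _ _).trans (le_max_left _ _)
  have hY : Multiset.card Y ≤ K := (le_max_right _ _).trans (le_max_left _ _)
  have hZ : Multiset.card Z ≤ K := le_max_right _ _
  rw [← minCouplingCost_pad_eq_SLD (max_le hX hZ), ← minCouplingCost_pad_eq_SLD (max_le hX hY),
    ← minCouplingCost_pad_eq_SLD (max_le hY hZ)]
  exact minCouplingCost_triangle (by rw [card_pad hX, card_pad hY])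
    (by rw [card_pad hY, card_pad hZ])

end SLD

lemma div_add_le_div_add_of_le {M s t : ℝ} (hM : 0 ≤ M) (hs : 0 ≤ s) (hst : s ≤ t) :
    s / (M + s) ≤ t / (M + t) := by
  rcases hs.eq_or_lt with rfl | hs
  · simp only [add_zero, zero_div]
    positivity
  rw [div_le_div_iff₀ (by linarith) (by linarith)]
  nlinarith [mul_le_mul_of_nonneg_right hst hM]

lemma div_le_div_add_of_add_le {m a D : ℝ} (hm : 0 ≤ m) (ha : 0 ≤ a) (h : m + a ≤ D) :
    a / D ≤ a / (m + a) := by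
  rcases ha.eq_or_lt with rfl | ha
  · simp
  exact div_le_div_of_nonneg_left ha.le (by linarith) h

theorem div_add_le_div_add_add_div_add {lx ly lz a b c : ℝ} (hlx : 0 ≤ lx) (hly : 0 ≤ ly)
    (hlz : 0 ≤ lz) (ha : 0 ≤ a) (hb : 0 ≤ b) (hc : 0 ≤ c) (hcab : c ≤ a + b)
    (hxy : ly ≤ a + lx) (hyz : ly ≤ b + lz) :
    c / (lx + lz + c) ≤ a / (lx + ly + a) + b / (ly + lz + b) :=
  calc c / (lx + lz + c) ≤ (a + b) / (lx + lz + (a + b)) :=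
        div_add_le_div_add_of_le (by positivity) hc hcab
    _ = a / (lx + lz + (a + b)) + b / (lx + lz + (a + b)) := add_div _ _ _
    _ ≤ a / (lx + ly + a) + b / (ly + lz + b) :=
        add_le_add (div_le_div_add_of_add_le (by positivity) ha (by linarith))
          (div_le_div_add_of_add_le (by positivity) hb (by linarith))

theorem NSLD_isMetric (X Y Z : Multiset (List α)) :
    NSLD X X = 0 ∧ NSLD X Y = NSLD Y X ∧
    NSLD X Z ≤ NSLD X Y + NSLD Y Z := by
  refine ⟨by simp [NSLD, SLD_self], by rw [NSLD, NSLD, SLD_comm, add_comm (aggLen X : ℝ)], ?_⟩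
  have hXZ : (SLD X Z : ℝ) ≤ SLD X Y + SLD Y Z := by exact_mod_cast SLD_triangle X Y Z
  have hXY : (aggLen Y : ℝ) ≤ SLD X Y + aggLen X := by exact_mod_cast aggLen_le_SLD_add X Y
  have hYZ : (aggLen Y : ℝ) ≤ SLD Y Z + aggLen Z := by
    exact_mod_cast SLD_comm Z Y ▸ aggLen_le_SLD_add Z Y
  simp only [NSLD, mul_div_assoc, ← mul_add]
  gcongr
  exact div_add_le_div_add_add_div_add (by positivity) (by positivity) (by positivity)
    (by positivity) (by positivity) (by positivity) hXZ hXY hYZ
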